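/- Let K ≥ 1, let E₀, …, E_{K−1} be nonempty pairwise disjoint sets of bit strings in Fin n → Fin 2 all of the same (finite) cardinality, let φ_i : (Fin n → Fin 2) → ℤ, and set κ_i = ∑ over e ∈ E_i of ω^(φ_i e) • |e⟩, with C = Submodule.span ℂ {κ₀, …, κ_{K−1}}. Let A be an XP operator of precision N with binary x-component. Then A maps C into C if and only if there exist a permutation π of Fin K with π ∘ π = id and f : Fin K → ℤ such that A.mulVec κ_i = ω^(f i) • κ_{π i} for all i; that is, an XP operator is a logical operator exactly when its action on the codewords is an order-at-most-2 permutation of the codewords combined with a phase ω^{f[i]} applied to each codeword. -/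

import Mathlib

open Matrix

/-- `ω = exp(πi/N)`. -/
noncomputable def omN (N : ℕ) : ℂ := Complex.exp (Real.pi * Complex.I / N)

/-- The Pauli X matrix. -/
def Xm : Matrix (Fin 2) (Fin 2) ℂ := !![0, 1; 1, 0]

/-- The precision-`N` phase matrix `P = diag(1, ω²)`. -/
noncomputable def Pm (N : ℕ) : Matrix (Fin 2) (Fin 2) ℂ := !![1, 0; 0, (omN N) ^ 2]

/-- The precision-`N` XP operator `XP_N(p|x|z)` on `n` qubits, the matrix indexed by bit
strings whose `(f, e)` entry is `ω^p * ∏ i, (X^(x i) * P^(z i)) (f i) (e i)`. -/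
noncomputable def XP (N n : ℕ) (p : ℤ) (x z : Fin n → ℤ) :
    Matrix (Fin n → Fin 2) (Fin n → Fin 2) ℂ :=
  Matrix.of fun f e => (omN N) ^ p * ∏ i, ((Xm ^ (x i)) * (Pm N) ^ (z i)) (f i) (e i)

/-- The antisymmetric operator `D_N(z) = XP_N(∑ i, z i | 0 | -z)`. -/
noncomputable def DN (N n : ℕ) (z : Fin n → ℤ) :
    Matrix (Fin n → Fin 2) (Fin n → Fin 2) ℂ :=
  XP N n (∑ i, z i) 0 (-z)

/-- A vector is binary if every entry is 0 or 1. -/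
def IsBinary {n : ℕ} (x : Fin n → ℤ) : Prop := ∀ i, x i = 0 ∨ x i = 1

/-!
`XP_N(p|x|z)` is a monomial matrix: it sends `|e⟩` to `ω^(p + 2 e·z) |e ⊕ x⟩`. So it maps a
vector supported on `S` to one supported on `S ⊕ x`, a set of the same size. A vector of `C` is
`∑ a_j κ_j`, and since the supports `E_j` are disjoint its support is the union of the `E_j` with
`a_j ≠ 0`; if that support has the common size of the `E_j`, only one `a_j` survives. Hence
`A κ_i = c κ_{π i}` with `E_{π i} = E_i ⊕ x`, which forces `π ∘ π = id`, and comparing one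
coefficient shows that `c` is a quotient of two powers of `ω`.
-/

open Function

theorem Matrix.diagonal_zpow {ι α : Type*} [Fintype ι] [DecidableEq ι] [Field α] (d : ι → α)
    (hd : ∀ i, d i ≠ 0) (k : ℤ) : diagonal d ^ k = diagonal (d ^ k) := by
  cases k with
  | ofNat m => simp only [Int.ofNat_eq_natCast, zpow_natCast, diagonal_pow]
  | negSucc m =>
    rw [zpow_negSucc, zpow_negSucc, diagonal_pow]
    refine inv_eq_left_inv ?_
    rw [diagonal_mul_diagonal, ← diagonal_one]
    congr 1
    funext i
    exact inv_mul_cancel₀ (pow_ne_zero _ (hd i))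

lemma Finset.prod_zpow_eq_zpow_sum₀ {ι G₀ : Type*} [CommGroupWithZero G₀] (s : Finset ι)
    (f : ι → ℤ) {a : G₀} (ha : a ≠ 0) : ∏ i ∈ s, a ^ f i = a ^ ∑ i ∈ s, f i := by
  classical
  induction s using Finset.induction with
  | empty => simp
  | insert i s hi ih => rw [prod_insert hi, sum_insert hi, ih, zpow_add₀ ha]

lemma omN_ne_zero (N : ℕ) : omN N ≠ 0 := Complex.exp_ne_zero _

lemma Pm_eq_diagonal (N : ℕ) : Pm N = diagonal fun c : Fin 2 => omN N ^ (2 * (c : ℕ)) := by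
  rw [diagonal_fin_two, Pm]
  simp

lemma Xm_mul_self : Xm * Xm = 1 := by
  rw [Xm, mul_fin_two, one_fin_two]
  norm_num

section Bits

open Fin.CommRing

lemma Xm_zpow_apply (b : ℤ) (a c : Fin 2) :
    (Xm ^ b) a c = if a = c + (b : Fin 2) then 1 else 0 := by
  let u : (Matrix (Fin 2) (Fin 2) ℂ)ˣ := ⟨Xm, Xm, Xm_mul_self, Xm_mul_self⟩
  have hu : u ^ 2 = 1 := Units.ext (by simp [u, sq, Xm_mul_self])
  have hmod : Xm ^ b = Xm ^ (b % 2) := by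
    rw [← coe_units_zpow u, ← coe_units_zpow u, zpow_eq_zpow_emod' b hu]
    rfl
  have hcast : (b : Fin 2) = ((b % 2 : ℤ) : Fin 2) := (ZMod.intCast_mod b 2).symm
  rw [hmod, hcast]
  rcases Int.emod_two_eq_zero_or_one b with h | h <;> rw [h] <;> fin_cases a <;> fin_cases c <;>
    simp [Xm]

lemma Xm_zpow_mul_Pm_zpow_apply (N : ℕ) (b k : ℤ) (a c : Fin 2) :
    (Xm ^ b * Pm N ^ k) a c = if a = c + (b : Fin 2) then omN N ^ (2 * k * (c : ℕ)) else 0 := by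
  rw [Pm_eq_diagonal, diagonal_zpow _ fun _ => pow_ne_zero _ (omN_ne_zero N), mul_diagonal,
    Xm_zpow_apply, Pi.pow_apply, ← zpow_natCast, ← _root_.zpow_mul]
  split_ifs
  · rw [one_mul]
    congr 1
    push_cast
    ring
  · rw [zero_mul]

/-- `e ⊕ x`, where only the parity of each `x i` matters. -/
def flipBits {n : ℕ} (x : Fin n → ℤ) (e : Fin n → Fin 2) : Fin n → Fin 2 :=
  e + fun i => (x i : Fin 2)

lemma flipBits_involutive {n : ℕ} (x : Fin n → ℤ) : Involutive (flipBits x) := fun e => by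
  funext i
  simp [flipBits, add_assoc, CharTwo.add_self_eq_zero]

end Bits

def xpPhase {n : ℕ} (p : ℤ) (z : Fin n → ℤ) (e : Fin n → Fin 2) : ℤ :=
  p + 2 * ∑ i, z i * (e i : ℕ)

section XPAction

variable (N n : ℕ) (p : ℤ) (x z : Fin n → ℤ)

lemma XP_apply (f e : Fin n → Fin 2) :
    XP N n p x z f e = if f = flipBits x e then omN N ^ xpPhase p z e else 0 := by
  simp only [XP, of_apply, Xm_zpow_mul_Pm_zpow_apply, Fintype.prod_ite_zero, ← funext_iff,
    Finset.prod_zpow_eq_zpow_sum₀ _ _ (omN_ne_zero N), mul_ite, mul_zero,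
    ← zpow_add₀ (omN_ne_zero N), xpPhase, Finset.mul_sum, mul_assoc]
  rfl

lemma XP_mulVec_apply (v : (Fin n → Fin 2) → ℂ) (f : Fin n → Fin 2) :
    (XP N n p x z *ᵥ v) f = omN N ^ xpPhase p z (flipBits x f) * v (flipBits x f) := by
  have hflip : ∀ e, f = flipBits x e ↔ e = flipBits x f := fun e => by
    rw [eq_comm, (flipBits_involutive x).eq_iff]
  simp only [mulVec, dotProduct, XP_apply, hflip, ite_mul, zero_mul, Finset.sum_ite_eq',
    Finset.mem_univ, if_true]

lemma support_XP_mulVec (v : (Fin n → Fin 2) → ℂ) :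
    support (XP N n p x z *ᵥ v) = flipBits x '' support v := by
  rw [Set.image_eq_preimage_of_inverse (flipBits_involutive x).leftInverse
    (flipBits_involutive x).rightInverse]
  ext f
  simp [XP_mulVec_apply, zpow_ne_zero _ (omN_ne_zero N)]

end XPAction

section Codewords

variable {ι K F : Type*} [Field F]

lemma Finset.sum_smul_single_one_apply [DecidableEq ι] (S : Finset ι) (a : ι → F) (f : ι) :
    (∑ e ∈ S, a e • (Pi.single e 1 : ι → F)) f = if f ∈ S then a f else 0 := by
  simp [Finset.sum_apply, Pi.single_apply]

lemma support_sum_smul_single_one [DecidableEq ι] (S : Finset ι) (a : ι → F)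
    (ha : ∀ e ∈ S, a e ≠ 0) : support (∑ e ∈ S, a e • (Pi.single e 1 : ι → F)) = S := by
  ext f
  rw [mem_support, Finset.sum_smul_single_one_apply]
  split_ifs with hf <;> simp [hf, ha]

variable [Fintype K]

lemma support_sum_smul_of_pairwise_disjoint (κ : K → ι → F)
    (hdisj : Pairwise (Disjoint on fun j => support (κ j))) (a : K → F) :
    support (∑ j, a j • κ j) = ⋃ j ∈ {j | a j ≠ 0}, support (κ j) := by
  ext f
  simp only [mem_support, Finset.sum_apply, Pi.smul_apply, smul_eq_mul, Set.mem_iUnion,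
    exists_prop]
  by_cases hf : ∃ j, κ j f ≠ 0
  · obtain ⟨j, hj⟩ := hf
    have hunique : ∀ k, κ k f ≠ 0 → k = j := fun k hk =>
      by_contra fun hkj => Set.disjoint_left.1 (hdisj hkj) hk hj
    have hsum : ∑ k, a k * κ k f = a j * κ j f := Fintype.sum_eq_single j fun k hk => by
      rw [notMem_support.1 fun hk' => hk (hunique k hk'), mul_zero]
    rw [hsum]
    constructor
    · exact fun h => ⟨j, left_ne_zero_of_mul h, hj⟩
    · rintro ⟨k, hak, hk⟩
      obtain rfl := hunique k hk
      exact mul_ne_zero hak hk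
  · simp only [not_exists, not_not] at hf
    simp [hf]

lemma exists_eq_smul_of_mem_span (κ : K → ι → F) (E : K → Finset ι)
    (hκ : ∀ j, support (κ j) = E j) (hdisj : Pairwise (Disjoint on E)) {m : ℕ}
    (hcard : ∀ j, (E j).card = m) (hm : m ≠ 0) {v : ι → F}
    (hv : v ∈ Submodule.span F (Set.range κ)) {T : Finset ι}
    (hT : support v = T) (hTcard : T.card = m) :
    ∃ j, ∃ c : F, T = E j ∧ v = c • κ j := by
  classical
  obtain ⟨a, rfl⟩ := (Submodule.mem_span_range_iff_exists_fun F).1 hv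
  set S := Finset.univ.filter (a · ≠ 0)
  have hTS : T = S.biUnion E := by
    apply Finset.coe_injective
    rw [← hT, support_sum_smul_of_pairwise_disjoint, Finset.coe_biUnion]
    · simp [S, hκ]
    · intro j k hjk
      simpa [onFun, hκ] using hdisj hjk
  have hS : S.card = 1 := by
    rwa [hTS, Finset.card_biUnion fun j _ k _ hjk => hdisj hjk, Finset.sum_congr rfl
      fun j _ => hcard j, Finset.sum_const, smul_eq_mul, mul_eq_right₀ hm] at hTcard
  obtain ⟨j, hj⟩ := Finset.card_eq_one.1 hS
  refine ⟨j, a j, by rw [hTS, hj, Finset.singleton_biUnion], Fintype.sum_eq_single j fun k hk => ?_⟩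
  have hak : a k = 0 := by
    by_contra hak
    exact hk (Finset.mem_singleton.1 (hj ▸ Finset.mem_filter.2 ⟨Finset.mem_univ k, hak⟩))
  rw [hak, zero_smul]

end Codewords

lemma involutive_of_image_eq {ι K : Type*} [DecidableEq ι] {σ : ι → ι} (hσ : Involutive σ)
    {E : K → Finset ι} (hne : ∀ i, (E i).Nonempty) (hdisj : Pairwise (Disjoint on E))
    {g : K → K} (hg : ∀ i, (E i).image σ = E (g i)) : Involutive g := fun i => by
  have hEgg : E (g (g i)) = E i := by
    rw [← hg, ← hg, Finset.image_image, hσ.comp_self, Finset.image_id]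
  by_contra h
  obtain ⟨e, he⟩ := hne i
  exact Finset.disjoint_left.1 (hdisj h) (hEgg ▸ he) he

lemma Matrix.mulVec_mem_span_range {ι K R : Type*} [Fintype ι] [CommSemiring R]
    (A : Matrix ι ι R) (v : K → ι → R) (h : ∀ i, A *ᵥ v i ∈ Submodule.span R (Set.range v)) :
    ∀ w ∈ Submodule.span R (Set.range v), A *ᵥ w ∈ Submodule.span R (Set.range v) :=
  fun _ hw => (Submodule.span_le (p := (Submodule.span R (Set.range v)).comap A.mulVecLin)).2
    (Set.range_subset_iff.2 h) hw

lemma XP_mulVec_codeword_eq_zpow_smul (N n K : ℕ) (E : Fin K → Finset (Fin n → Fin 2))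
    (hne : ∀ i, (E i).Nonempty) (hdisj : Pairwise (Disjoint on E))
    (hcard : ∀ i j, (E i).card = (E j).card) (φ : Fin K → (Fin n → Fin 2) → ℤ)
    (κ : Fin K → ((Fin n → Fin 2) → ℂ))
    (hκ : ∀ i, κ i = ∑ e ∈ E i, (omN N) ^ (φ i e) • (Pi.single e 1 : (Fin n → Fin 2) → ℂ))
    (p : ℤ) (x z : Fin n → ℤ)
    (hA : ∀ i, XP N n p x z *ᵥ κ i ∈ Submodule.span ℂ (Set.range κ)) (i : Fin K) :
    ∃ j, ∃ t : ℤ, (E i).image (flipBits x) = E j ∧ XP N n p x z *ᵥ κ i = omN N ^ t • κ j := by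
  have hω := omN_ne_zero N
  have hflip := flipBits_involutive x
  have hsupp : ∀ j, support (κ j) = E j := fun j =>
    hκ j ▸ support_sum_smul_single_one _ _ fun _ _ => zpow_ne_zero _ hω
  have hκ_apply : ∀ j, ∀ e ∈ E j, κ j e = omN N ^ φ j e := fun j e he => by
    rw [hκ j, Finset.sum_smul_single_one_apply, if_pos he]
  obtain ⟨j, c, hE, hAκ⟩ := exists_eq_smul_of_mem_span κ E hsupp hdisj (fun j => hcard j i)
    (hne i).card_pos.ne' (hA i) (by rw [support_XP_mulVec, hsupp, Finset.coe_image])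
    (Finset.card_image_of_injective _ hflip.injective)
  obtain ⟨e, he⟩ := hne i
  have hfe : flipBits x e ∈ E j := hE ▸ Finset.mem_image_of_mem _ he
  have hcoeff := congrFun hAκ (flipBits x e)
  rw [XP_mulVec_apply, hflip e, hκ_apply i e he, Pi.smul_apply, smul_eq_mul,
    hκ_apply j _ hfe, ← zpow_add₀ hω] at hcoeff
  have hc : c = omN N ^ (xpPhase p z e + φ i e - φ j (flipBits x e)) :=
    (eq_div_of_mul_eq (zpow_ne_zero _ hω) hcoeff.symm).trans (zpow_sub₀ hω _ _).symm
  exact ⟨j, _, hE, hc ▸ hAκ⟩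

theorem logical_XP_iff_perm_phase_general (N n : ℕ) (K : ℕ)
    (E : Fin K → Finset (Fin n → Fin 2))
    (hne : ∀ i, (E i).Nonempty)
    (hdisj : ∀ i j, i ≠ j → Disjoint (E i) (E j))
    (hcard : ∀ i j, (E i).card = (E j).card)
    (φ : Fin K → (Fin n → Fin 2) → ℤ)
    (κ : Fin K → ((Fin n → Fin 2) → ℂ))
    (hκ : ∀ i, κ i = ∑ e ∈ E i, (omN N) ^ (φ i e) • (Pi.single e 1 : (Fin n → Fin 2) → ℂ))
    (C : Submodule ℂ ((Fin n → Fin 2) → ℂ))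
    (hC : C = Submodule.span ℂ (Set.range κ))
    (p : ℤ) (x z : Fin n → ℤ) :
    (∀ w ∈ C, (XP N n p x z).mulVec w ∈ C) ↔
      ∃ π : Equiv.Perm (Fin K), (⇑π ∘ ⇑π = id) ∧ ∃ f : Fin K → ℤ,
        ∀ i, (XP N n p x z).mulVec (κ i) = (omN N) ^ (f i) • κ (π i) := by
  subst hC
  constructor
  · intro hA
    choose g t hgE hgκ using XP_mulVec_codeword_eq_zpow_smul N n K E hne hdisj hcard φ κ hκ p x z
      fun i => hA _ (Submodule.subset_span ⟨i, rfl⟩)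
    have hg : Involutive g := involutive_of_image_eq (flipBits_involutive x) hne hdisj hgE
    exact ⟨hg.toPerm g, funext hg, t, hgκ⟩
  · rintro ⟨π, -, f, hf⟩
    refine (XP N n p x z).mulVec_mem_span_range κ fun i => ?_
    rw [hf i]
    exact Submodule.smul_mem _ _ (Submodule.subset_span ⟨π i, rfl⟩)

/-- **Characterisation of logical XP operators**: for codewords
`κ_i = ∑_{e ∈ E_i} ω^(φ_i e) |e⟩` over nonempty, pairwise disjoint supports of equal size,
spanning the codespace `C`, an XP operator `A` maps `C` into `C` if and only if its action on
the codewords is an order-at-most-2 permutation combined with a phase on each codeword: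
`A κ_i = ω^(f i) κ_{π i}`. -/
theorem logical_XP_iff_perm_phase (N n : ℕ) (hN : 2 ≤ N) (hn : 1 ≤ n) (K : ℕ) (hK : 1 ≤ K)
    (E : Fin K → Finset (Fin n → Fin 2))
    (hne : ∀ i, (E i).Nonempty)
    (hdisj : ∀ i j, i ≠ j → Disjoint (E i) (E j))
    (hcard : ∀ i j, (E i).card = (E j).card)
    (φ : Fin K → (Fin n → Fin 2) → ℤ)
    (κ : Fin K → ((Fin n → Fin 2) → ℂ))
    (hκ : ∀ i, κ i = ∑ e ∈ E i, (omN N) ^ (φ i e) • (Pi.single e 1 : (Fin n → Fin 2) → ℂ))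
    (C : Submodule ℂ ((Fin n → Fin 2) → ℂ))
    (hC : C = Submodule.span ℂ (Set.range κ))
    (p : ℤ) (x z : Fin n → ℤ) (hx : IsBinary x) :
    (∀ w ∈ C, (XP N n p x z).mulVec w ∈ C) ↔
      ∃ π : Equiv.Perm (Fin K), (⇑π ∘ ⇑π = id) ∧ ∃ f : Fin K → ℤ,
        ∀ i, (XP N n p x z).mulVec (κ i) = (omN N) ^ (f i) • κ (π i) :=
  logical_XP_iff_perm_phase_general N n K E hne hdisj hcard φ κ hκ C hC p x z
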